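/- arXiv:2501.11616 — 3 statements merged into one kernel-verified Lean document; each statement's English description precedes it below -/
import Mathlib

section
/- Suppose Z ∈ ℝ^{m×n} satisfies the 4s-restricted isometry property with constant δ ∈ (0,1), i.e., (1−δ)‖v‖₂² ≤ ‖Zv‖₂² ≤ (1+δ)‖v‖₂² for all v with at most 4s nonzero entries. Then for every v ∈ ℝⁿ, ‖Zv‖₂ ≤ √(1+δ) (‖v‖₂ + ‖v‖₁/√s). -/
/-!
Split `v` into blocks of `s` coordinates in decreasing order of `|v i|`. The first block is
`s`-sparse, so its image has norm at most `√(1 + δ) ‖v‖₂`. Every later block has entries bounded by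
the mean absolute value `m` of the block before it, hence ℓ²-norm at most `√s · m`, which is the
ℓ¹-norm of the previous block divided by `√s`; these add up to at most `‖v‖₁ / √s`. The triangle
inequality for `u ↦ ‖Z u‖₂` then gives the bound. Formally, the blocks are peeled off one at a time
by strong induction on the size of the support, keeping a bound `M` on the remaining entries.
-/

open Finset

theorem Finset.exists_subset_card_eq_forall_le {α β : Type*} [DecidableEq α] [LinearOrder β]
    (f : α → β) {T : Finset α} {k : ℕ} (hk : k ≤ #T) :
    ∃ S ⊆ T, #S = k ∧ ∀ i ∈ S, ∀ j ∈ T \ S, f j ≤ f i := by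
  induction k with
  | zero => exact ⟨∅, empty_subset _, rfl, by simp⟩
  | succ k ih =>
    obtain ⟨S, hST, hcard, htop⟩ := ih (by omega)
    have hrest : (T \ S).Nonempty := by
      rw [sdiff_nonempty]
      intro hTS
      have := card_le_card hTS
      omega
    obtain ⟨i₀, hi₀, hmax⟩ := exists_max_image (T \ S) f hrest
    rw [mem_sdiff] at hi₀
    refine ⟨insert i₀ S, insert_subset hi₀.1 hST, by rw [card_insert_of_notMem hi₀.2, hcard], ?_⟩
    intro i hi j hj
    have hj' : j ∈ T \ S := by
      simp only [mem_sdiff, mem_insert, not_or] at hj ⊢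
      exact ⟨hj.1, hj.2.2⟩
    rcases mem_insert.1 hi with rfl | hi
    · exact hmax j hj'
    · exact htop i hi j hj'

section SparseBlocks

variable {ι : Type*} [Fintype ι]

theorem sqrt_sum_sq_add_le (a b : ι → ℝ) :
    √(∑ i, (a i + b i) ^ 2) ≤ √(∑ i, a i ^ 2) + √(∑ i, b i ^ 2) := by
  simpa [EuclideanSpace.norm_eq] using
    norm_add_le (WithLp.toLp 2 a : EuclideanSpace ℝ ι) (WithLp.toLp 2 b)

theorem sum_comp_indicator [DecidableEq ι] {α β : Type*} [Zero α] [AddCommMonoid β]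
    (v : ι → α) (T : Finset ι) {g : α → β} (hg : g 0 = 0) :
    ∑ i, g ((T : Set ι).indicator v i) = ∑ i ∈ T, g (v i) := by
  simp [Set.indicator_apply, apply_ite g, hg]

theorem sqrt_sum_sq_le_of_abs_le {s : ℕ} (hs : 0 < s) (v : ι → ℝ) {M : ℝ} (hM₀ : 0 ≤ M)
    (hM : ∀ i, |v i| ≤ M) : √(∑ i, v i ^ 2) ≤ √s * M + (∑ i, |v i|) / √s := by
  have hsqrt : 0 < √(s : ℝ) := by positivity
  have hsq : ∑ i, v i ^ 2 ≤ M * ∑ i, |v i| := by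
    rw [mul_sum]
    gcongr with i
    rw [← sq_abs, sq]
    exact mul_le_mul_of_nonneg_right (hM i) (abs_nonneg _)
  have hprod : M * ∑ i, |v i| = (√s * M) * ((∑ i, |v i|) / √s) := by
    field_simp
  have hl1 : 0 ≤ (∑ i, |v i|) / √s := by positivity
  have hbound : 0 ≤ √(s : ℝ) * M := by positivity
  rw [Real.sqrt_le_iff]
  refine ⟨by positivity, ?_⟩
  calc ∑ i, v i ^ 2 ≤ M * ∑ i, |v i| := hsq
    _ = (√s * M) * ((∑ i, |v i|) / √s) := hprod
    _ ≤ (√s * M + (∑ i, |v i|) / √s) ^ 2 := by nlinarith [mul_nonneg hbound hl1]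

variable [DecidableEq ι] {f : (ι → ℝ) → ℝ} {C : ℝ} {s : ℕ}

/-- The peeling step: split off the `s` largest entries of `v`. -/
theorem exists_card_eq_le_sqrt_sum_sq_add (hf : ∀ u w, f (u + w) ≤ f u + f w)
    (hsparse : ∀ v : ι → ℝ, #{i | v i ≠ 0} ≤ s → f v ≤ C * √(∑ i, v i ^ 2))
    (hs : 0 < s) (v : ι → ℝ) (hv : s ≤ #{i | v i ≠ 0})
    (htail : ∀ w : ι → ℝ, #{i | w i ≠ 0} < #{i | v i ≠ 0} → ∀ M, 0 ≤ M →
      (∀ i, |w i| ≤ M) → f w ≤ C * (√s * M + (∑ i, |w i|) / √s)) :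
    ∃ S : Finset ι, #S = s ∧ f v ≤ C * (√(∑ i ∈ S, v i ^ 2) + (∑ i, |v i|) / √s) := by
  obtain ⟨S, hS, hScard, htop⟩ := exists_subset_card_eq_forall_le (fun i => |v i|) hv
  refine ⟨S, hScard, ?_⟩
  set head := (S : Set ι).indicator v
  set tail := ((Sᶜ : Finset ι) : Set ι).indicator v
  have hsplit : head + tail = v := by
    simp only [head, tail, coe_compl, Set.indicator_self_add_compl]
  have hhead : f head ≤ C * √(∑ i ∈ S, v i ^ 2) := by
    rw [← sum_comp_indicator v S (g := (· ^ 2)) (by simp)]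
    refine hsparse head ((card_le_card fun i hi => ?_).trans hScard.le)
    by_contra hiS
    simp [head, hiS] at hi
  have htail_support : ({i | tail i ≠ 0} : Finset ι) = ({i | v i ≠ 0} : Finset ι) \ S := by
    ext i
    by_cases hiS : i ∈ S <;> simp [tail, hiS]
  have htail_card : #{i | tail i ≠ 0} < #{i | v i ≠ 0} := by
    rw [htail_support, card_sdiff_of_subset hS]
    omega
  have htail_le : ∀ j, |tail j| ≤ (∑ i ∈ S, |v i|) / s := by
    intro j
    rw [le_div_iff₀ (by positivity)]
    by_cases hj : j ∈ ({i | v i ≠ 0} : Finset ι) \ S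
    · have hjS : j ∉ S := (mem_sdiff.1 hj).2
      calc |tail j| * s = ∑ _i ∈ S, |v j| := by simp [tail, hjS, hScard, mul_comm]
        _ ≤ ∑ i ∈ S, |v i| := sum_le_sum fun i hi => htop i hi j hj
    · rw [← htail_support] at hj
      simp only [mem_filter, mem_univ, true_and, not_not] at hj
      simp [hj, sum_nonneg]
  have hmass : ∑ i ∈ S, |v i| + ∑ i, |tail i| = ∑ i, |v i| := by
    rw [sum_comp_indicator _ _ abs_zero, sum_add_sum_compl]
  calc f v = f (head + tail) := by rw [hsplit]
    _ ≤ f head + f tail := hf _ _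
    _ ≤ C * √(∑ i ∈ S, v i ^ 2) +
          C * (√s * ((∑ i ∈ S, |v i|) / s) + (∑ i, |tail i|) / √s) :=
        add_le_add hhead (htail tail htail_card _ (by positivity) htail_le)
    _ = C * (√(∑ i ∈ S, v i ^ 2) + (∑ i, |v i|) / √s) := by
        rw [mul_div_left_comm, Real.sqrt_div_self', mul_one_div, ← hmass]
        ring

theorem le_mul_sqrt_mul_add_of_abs_le (hf : ∀ u w, f (u + w) ≤ f u + f w)
    (hsparse : ∀ v : ι → ℝ, #{i | v i ≠ 0} ≤ s → f v ≤ C * √(∑ i, v i ^ 2))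
    (hC : 0 ≤ C) (hs : 0 < s) (w : ι → ℝ) {M : ℝ} (hM₀ : 0 ≤ M) (hM : ∀ i, |w i| ≤ M) :
    f w ≤ C * (√s * M + (∑ i, |w i|) / √s) := by
  induction h : #{i | w i ≠ 0} using Nat.strong_induction_on generalizing w M with
  | _ k ih =>
  by_cases hw : #{i | w i ≠ 0} ≤ s
  · exact (hsparse w hw).trans
      (mul_le_mul_of_nonneg_left (sqrt_sum_sq_le_of_abs_le hs w hM₀ hM) hC)
  obtain ⟨S, hScard, hbound⟩ := exists_card_eq_le_sqrt_sum_sq_add hf hsparse hs w (by omega)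
    fun w' hw' M' hM₀' hM' => ih _ (h ▸ hw') w' hM₀' hM' rfl
  refine hbound.trans (mul_le_mul_of_nonneg_left (add_le_add_left ?_ _) hC)
  calc √(∑ i ∈ S, w i ^ 2) ≤ √(∑ _i ∈ S, M ^ 2) :=
        Real.sqrt_le_sqrt (sum_le_sum fun i _ => sq_le_sq.2 ((hM i).trans (le_abs_self M)))
    _ = √s * M := by
        rw [sum_const, hScard, nsmul_eq_mul, Real.sqrt_mul (Nat.cast_nonneg s), Real.sqrt_sq hM₀]

theorem le_mul_sqrt_sum_sq_add (hf : ∀ u w, f (u + w) ≤ f u + f w)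
    (hsparse : ∀ v : ι → ℝ, #{i | v i ≠ 0} ≤ s → f v ≤ C * √(∑ i, v i ^ 2))
    (hC : 0 ≤ C) (hs : 0 < s) (v : ι → ℝ) :
    f v ≤ C * (√(∑ i, v i ^ 2) + (∑ i, |v i|) / √s) := by
  by_cases hv : #{i | v i ≠ 0} ≤ s
  · exact (hsparse v hv).trans
      (mul_le_mul_of_nonneg_left (le_add_of_nonneg_right (by positivity)) hC)
  obtain ⟨S, -, hbound⟩ := exists_card_eq_le_sqrt_sum_sq_add hf hsparse hs v (by omega)
    fun w _ M hM₀ hM => le_mul_sqrt_mul_add_of_abs_le hf hsparse hC hs w hM₀ hM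
  exact hbound.trans (mul_le_mul_of_nonneg_left (add_le_add_left
    (Real.sqrt_le_sqrt (sum_le_univ_sum_of_nonneg fun i => sq_nonneg (v i))) _) hC)

end SparseBlocks

theorem stmt_2_general (m n s : ℕ) (hs : 1 ≤ s) (δ : ℝ)
    (Z : Matrix (Fin m) (Fin n) ℝ)
    (hRIP : ∀ v : Fin n → ℝ,
      (Finset.univ.filter fun i => v i ≠ 0).card ≤ 4 * s →
      (1 - δ) * ∑ i, v i ^ 2 ≤ ∑ i, (Z.mulVec v i) ^ 2 ∧
      ∑ i, (Z.mulVec v i) ^ 2 ≤ (1 + δ) * ∑ i, v i ^ 2) :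
    ∀ v : Fin n → ℝ,
      Real.sqrt (∑ i, (Z.mulVec v i) ^ 2) ≤
        Real.sqrt (1 + δ) *
          (Real.sqrt (∑ i, v i ^ 2) + (∑ i, |v i|) / Real.sqrt s) := by
  refine le_mul_sqrt_sum_sq_add (fun u w => ?_) (fun v hv => ?_) (Real.sqrt_nonneg _) hs
  · simpa only [Matrix.mulVec_add, Pi.add_apply] using sqrt_sum_sq_add_le (Z.mulVec u) (Z.mulVec w)
  · rw [← Real.sqrt_mul' _ (sum_nonneg fun i _ => sq_nonneg (v i))]
    exact Real.sqrt_le_sqrt (hRIP v (by omega)).2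

theorem stmt_2 (m n s : ℕ) (hs : 1 ≤ s) (hsn : 4 * s ≤ n) (δ : ℝ)
    (hδ0 : 0 < δ) (hδ1 : δ < 1) (Z : Matrix (Fin m) (Fin n) ℝ)
    (hRIP : ∀ v : Fin n → ℝ,
      (Finset.univ.filter fun i => v i ≠ 0).card ≤ 4 * s →
      (1 - δ) * ∑ i, v i ^ 2 ≤ ∑ i, (Z.mulVec v i) ^ 2 ∧
      ∑ i, (Z.mulVec v i) ^ 2 ≤ (1 + δ) * ∑ i, v i ^ 2) :
    ∀ v : Fin n → ℝ,
      Real.sqrt (∑ i, (Z.mulVec v i) ^ 2) ≤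
        Real.sqrt (1 + δ) *
          (Real.sqrt (∑ i, v i ^ 2) + (∑ i, |v i|) / Real.sqrt s) :=
  stmt_2_general m n s hs δ Z hRIP
end

section
/- Suppose f : ℝⁿ → ℝ is differentiable with L-Lipschitz gradient, and let x, g ∈ ℝⁿ, ε ∈ (0,1), θ ∈ [0, 1/2) satisfy ‖∇f(x)‖ > ε and ‖g − ∇f(x)‖ ≤ (θ/2)‖∇f(x)‖ + (θ/2)ε. Let x⁺ = x − (1/σ) g with σ ≥ (θ+1)² L / (1 − 2θ). Then f(x) − f(x⁺) ≥ ε² / (2σ). -/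
/-!
The descent lemma `f (x + d) ≤ f x + ⟪∇f x, d⟫ + (L/2)‖d‖²` applied to the step `d = -(1/σ) g`
gives `f x - f x⁺ ≥ ⟪∇f x, g⟫/σ - L‖g‖²/(2σ²)`. Since `ε < ‖∇f x‖`, the error bound makes `g` a
`θ`-relative approximation of `∇f x`, so `⟪∇f x, g⟫ ≥ (1 - θ)‖∇f x‖²` and `‖g‖ ≤ (1 + θ)‖∇f x‖`.
The choice of `σ` is exactly what makes `L(1 + θ)²/σ² ≤ (1 - 2θ)/σ`, so the decrease is at least
`‖∇f x‖²/(2σ) ≥ ε²/(2σ)`.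
-/

open InnerProductSpace

section Descent

variable {E : Type*} [NormedAddCommGroup E] [InnerProductSpace ℝ E] [CompleteSpace E]
  {f : E → ℝ} {L : ℝ}

theorem hasDerivAt_comp_add_smul (hf : Differentiable ℝ f) (x d : E) (t : ℝ) :
    HasDerivAt (fun s : ℝ => f (x + s • d)) ⟪gradient f (x + t • d), d⟫_ℝ t := by
  have hline : HasDerivAt (fun s : ℝ => x + s • d) d t := by
    simpa using ((hasDerivAt_id t).smul_const d).const_add x
  exact (hf (x + t • d)).hasGradientAt.hasFDerivAt.comp_hasDerivAt t hline

theorem inner_gradient_add_smul_sub_le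
    (hLip : ∀ u v : E, ‖gradient f u - gradient f v‖ ≤ L * ‖u - v‖) (x d : E) {t : ℝ}
    (ht : 0 ≤ t) : ⟪gradient f (x + t • d) - gradient f x, d⟫_ℝ ≤ L * t * ‖d‖ ^ 2 :=
  calc _ ≤ ‖gradient f (x + t • d) - gradient f x‖ * ‖d‖ := real_inner_le_norm _ _
    _ ≤ L * ‖x + t • d - x‖ * ‖d‖ := by gcongr; exact hLip _ _
    _ = L * t * ‖d‖ ^ 2 := by
      rw [add_sub_cancel_left, norm_smul, Real.norm_of_nonneg ht]; ring

theorem image_add_le_of_gradient_lipschitz (hf : Differentiable ℝ f)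
    (hLip : ∀ u v : E, ‖gradient f u - gradient f v‖ ≤ L * ‖u - v‖) (x d : E) :
    f (x + d) ≤ f x + ⟪gradient f x, d⟫_ℝ + L / 2 * ‖d‖ ^ 2 := by
  let φ : ℝ → ℝ := fun t => f (x + t • d) - t * ⟪gradient f x, d⟫_ℝ - L / 2 * t ^ 2 * ‖d‖ ^ 2
  have hφ : ∀ t, HasDerivAt φ
      (⟪gradient f (x + t • d), d⟫_ℝ - ⟪gradient f x, d⟫_ℝ - L * t * ‖d‖ ^ 2) t := by
    intro t
    have hlin : HasDerivAt (fun s : ℝ => s * ⟪gradient f x, d⟫_ℝ) ⟪gradient f x, d⟫_ℝ t := by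
      simpa using (hasDerivAt_id t).mul_const ⟪gradient f x, d⟫_ℝ
    have hquad : HasDerivAt (fun s : ℝ => L / 2 * s ^ 2 * ‖d‖ ^ 2) (L * t * ‖d‖ ^ 2) t :=
      (((hasDerivAt_pow 2 t).const_mul (L / 2)).mul_const (‖d‖ ^ 2)).congr_deriv (by ring)
    exact ((hasDerivAt_comp_add_smul hf x d t).sub hlin).sub hquad
  have hanti : AntitoneOn φ (Set.Icc 0 1) := by
    refine antitoneOn_of_hasDerivWithinAt_nonpos (convex_Icc 0 1)
      (fun t _ => (hφ t).continuousAt.continuousWithinAt) (fun t _ => (hφ t).hasDerivWithinAt)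
      fun t ht => ?_
    rw [interior_Icc] at ht
    have := inner_gradient_add_smul_sub_le hLip x d ht.1.le
    rw [inner_sub_left] at this
    linarith
  have := hanti (Set.left_mem_Icc.2 zero_le_one) (Set.right_mem_Icc.2 zero_le_one) zero_le_one
  simp only [φ, one_smul, zero_smul, add_zero, one_pow, zero_mul, one_mul, sub_zero] at this
  linarith

theorem image_sub_smul_le_of_gradient_lipschitz (hf : Differentiable ℝ f)
    (hLip : ∀ u v : E, ‖gradient f u - gradient f v‖ ≤ L * ‖u - v‖) (x g : E) (s : ℝ) :
    f (x - s • g) ≤ f x - s * ⟪gradient f x, g⟫_ℝ + L / 2 * s ^ 2 * ‖g‖ ^ 2 := by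
  have := image_add_le_of_gradient_lipschitz hf hLip x (-(s • g))
  rwa [← sub_eq_add_neg, inner_neg_right, real_inner_smul_right, norm_neg, norm_smul,
    mul_pow, Real.norm_eq_abs, sq_abs, ← sub_eq_add_neg, ← mul_assoc] at this

end Descent

theorem norm_le_one_add_mul_of_norm_sub_le {E : Type*} [SeminormedAddCommGroup E] {a g : E}
    {θ : ℝ} (h : ‖g - a‖ ≤ θ * ‖a‖) : ‖g‖ ≤ (1 + θ) * ‖a‖ := by
  linarith [norm_le_norm_add_norm_sub' g a]

theorem one_sub_mul_sq_norm_le_inner_of_norm_sub_le {E : Type*} [NormedAddCommGroup E]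
    [InnerProductSpace ℝ E] {a g : E} {θ : ℝ} (h : ‖g - a‖ ≤ θ * ‖a‖) :
    (1 - θ) * ‖a‖ ^ 2 ≤ ⟪a, g⟫_ℝ := by
  have hsplit : ⟪a, g⟫_ℝ = ‖a‖ ^ 2 + ⟪a, g - a⟫_ℝ := by
    rw [inner_sub_right, real_inner_self_eq_norm_sq]; ring
  have hcs : -(‖a‖ * ‖g - a‖) ≤ ⟪a, g - a⟫_ℝ := neg_le_of_abs_le (abs_real_inner_le_norm a _)
  nlinarith [norm_nonneg a]

theorem stmt_4_general (n : ℕ) (L ε θ σ : ℝ) (hL : 0 < L) (hε0 : 0 < ε)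
    (hθ0 : 0 ≤ θ) (hθ1 : θ < 1 / 2) (hσ : 0 < σ)
    (f : EuclideanSpace ℝ (Fin n) → ℝ) (hf : Differentiable ℝ f)
    (hLip : ∀ u v : EuclideanSpace ℝ (Fin n),
      ‖gradient f u - gradient f v‖ ≤ L * ‖u - v‖)
    (x g : EuclideanSpace ℝ (Fin n))
    (hgrad : ε < ‖gradient f x‖)
    (hg : ‖g - gradient f x‖ ≤ θ / 2 * ‖gradient f x‖ + θ / 2 * ε)
    (hσL : (θ + 1) ^ 2 * L / (1 - 2 * θ) ≤ σ) :
    ε ^ 2 / (2 * σ) ≤ f x - f (x - (1 / σ) • g) := by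
  have hLσ : (θ + 1) ^ 2 * L ≤ σ * (1 - 2 * θ) := by
    rwa [div_le_iff₀ (by linarith)] at hσL
  have hrel : ‖g - gradient f x‖ ≤ θ * ‖gradient f x‖ := by nlinarith
  have hinner := one_sub_mul_sq_norm_le_inner_of_norm_sub_le hrel
  have hnorm := norm_le_one_add_mul_of_norm_sub_le hrel
  have hdesc := image_sub_smul_le_of_gradient_lipschitz hf hLip x g (1 / σ)
  set G := ‖gradient f x‖
  have hstep : L / 2 * (1 / σ) ^ 2 * ((1 + θ) * G) ^ 2 ≤ (1 - 2 * θ) / (2 * σ) * G ^ 2 :=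
    calc _ = (θ + 1) ^ 2 * L * (G ^ 2 / (2 * σ ^ 2)) := by ring
      _ ≤ σ * (1 - 2 * θ) * (G ^ 2 / (2 * σ ^ 2)) := by gcongr
      _ = _ := by field_simp
  calc ε ^ 2 / (2 * σ) ≤ G ^ 2 / (2 * σ) := by gcongr
    _ = 1 / σ * ((1 - θ) * G ^ 2) - (1 - 2 * θ) / (2 * σ) * G ^ 2 := by field_simp; ring
    _ ≤ 1 / σ * ((1 - θ) * G ^ 2) - L / 2 * (1 / σ) ^ 2 * ((1 + θ) * G) ^ 2 := by linarith
    _ ≤ 1 / σ * ⟪gradient f x, g⟫_ℝ - L / 2 * (1 / σ) ^ 2 * ‖g‖ ^ 2 := by gcongr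
    _ ≤ f x - f (x - (1 / σ) • g) := by linarith

theorem stmt_4 (n : ℕ) (L ε θ σ : ℝ) (hL : 0 < L) (hε0 : 0 < ε) (hε1 : ε < 1)
    (hθ0 : 0 ≤ θ) (hθ1 : θ < 1 / 2) (hσ : 0 < σ)
    (f : EuclideanSpace ℝ (Fin n) → ℝ) (hf : Differentiable ℝ f)
    (hLip : ∀ u v : EuclideanSpace ℝ (Fin n),
      ‖gradient f u - gradient f v‖ ≤ L * ‖u - v‖)
    (x g : EuclideanSpace ℝ (Fin n))
    (hgrad : ε < ‖gradient f x‖)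
    (hg : ‖g - gradient f x‖ ≤ θ / 2 * ‖gradient f x‖ + θ / 2 * ε)
    (hσL : (θ + 1) ^ 2 * L / (1 - 2 * θ) ≤ σ) :
    ε ^ 2 / (2 * σ) ≤ f x - f (x - (1 / σ) • g) :=
  stmt_4_general n L ε θ σ hL hε0 hθ0 hθ1 hσ f hf hLip x g hgrad hg hσL
end

section
/- Suppose f : ℝⁿ → ℝ is differentiable with L-Lipschitz gradient and g ∈ ℝⁿ satisfies ‖g − ∇f(x)‖ ≤ θ‖∇f(x)‖ for some θ ∈ [0, 1/2). Then for x⁺ = x − (1/σ)g with σ > 0, f(x) − f(x⁺) ≥ (1 − θ − (L/(2σ))(θ+1)²) (1/σ) ‖∇f(x)‖². -/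
/-!
The descent lemma bounds `f (x - σ⁻¹ • g)` by the quadratic model
`f x - σ⁻¹ ⟪∇f x, g⟫ + (L / 2) σ⁻² ‖g‖²`. The relative error bound on `g` gives
`⟪∇f x, g⟫ ≥ (1 - θ) ‖∇f x‖²` (Cauchy–Schwarz on `⟪∇f x, g - ∇f x⟫`) and
`‖g‖ ≤ (1 + θ) ‖∇f x‖` (triangle inequality); substituting both yields the decrease.
-/

open Set RealInnerProductSpace

theorem le_add_fderiv_add_half_mul_sq_of_norm_fderiv_sub_le {E : Type*} [NormedAddCommGroup E]
    [NormedSpace ℝ E] {f : E → ℝ} {f' : E → E →L[ℝ] ℝ} {L : ℝ} {x : E} (hf : ∀ u, HasFDerivAt f (f' u) u)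
    (hLip : ∀ u, ‖f' u - f' x‖ ≤ L * ‖u - x‖) (y : E) :
    f y ≤ f x + f' x (y - x) + L / 2 * ‖y - x‖ ^ 2 := by
  set v := y - x
  -- The defect from the quadratic upper model decreases along the segment from `x` to `y`.
  let φ : ℝ → ℝ := fun t ↦ f (x + t • v) - t * f' x v - L / 2 * t ^ 2 * ‖v‖ ^ 2
  have hφ : ∀ t, HasDerivAt φ (f' (x + t • v) v - f' x v - L * t * ‖v‖ ^ 2) t := by
    intro t
    have hline : HasDerivAt (fun t : ℝ ↦ x + t • v) v t := by
      simpa using ((hasDerivAt_id t).smul_const v).const_add x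
    refine ((((hf _).comp_hasDerivAt t hline).sub ((hasDerivAt_id t).mul_const (f' x v))).sub
      (((hasDerivAt_pow 2 t).const_mul (L / 2)).mul_const (‖v‖ ^ 2))).congr_deriv ?_
    simp only [Nat.cast_ofNat, one_mul]
    ring
  have hφ'_nonpos : ∀ t ∈ interior (Icc (0 : ℝ) 1),
      f' (x + t • v) v - f' x v - L * t * ‖v‖ ^ 2 ≤ 0 := by
    intro t ht
    rw [interior_Icc] at ht
    have hgrowth : f' (x + t • v) v - f' x v ≤ L * t * ‖v‖ ^ 2 :=
      calc f' (x + t • v) v - f' x v = (f' (x + t • v) - f' x) v := rfl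
        _ ≤ ‖f' (x + t • v) - f' x‖ * ‖v‖ :=
          (Real.le_norm_self _).trans (ContinuousLinearMap.le_opNorm _ _)
        _ ≤ L * ‖x + t • v - x‖ * ‖v‖ := by gcongr; exact hLip _
        _ = L * t * ‖v‖ ^ 2 := by
          rw [add_sub_cancel_left, norm_smul, Real.norm_of_nonneg ht.1.le]; ring
    linarith
  have hanti : AntitoneOn φ (Icc 0 1) :=
    antitoneOn_of_hasDerivWithinAt_nonpos (convex_Icc 0 1)
      (fun t _ ↦ (hφ t).continuousAt.continuousWithinAt) (fun t _ ↦ (hφ t).hasDerivWithinAt)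
      hφ'_nonpos
  have h10 : φ 1 ≤ φ 0 := hanti (by simp) (by simp) zero_le_one
  simp only [φ, one_smul, zero_smul, add_zero, one_mul, zero_mul, one_pow, sub_zero, v,
    add_sub_cancel] at h10
  linarith

theorem norm_le_one_add_mul_norm_of_norm_sub_le {E : Type*} [SeminormedAddCommGroup E]
    {G g : E} {θ : ℝ} (hg : ‖g - G‖ ≤ θ * ‖G‖) : ‖g‖ ≤ (1 + θ) * ‖G‖ := by
  linarith [norm_le_norm_add_norm_sub' g G]

section InexactGradient

variable {F : Type*} [NormedAddCommGroup F] [InnerProductSpace ℝ F]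

theorem le_add_inner_gradient_add_half_mul_sq_of_norm_gradient_sub_le [CompleteSpace F]
    {f : F → ℝ} {L : ℝ} {x : F} (hf : Differentiable ℝ f)
    (hLip : ∀ u, ‖gradient f u - gradient f x‖ ≤ L * ‖u - x‖) (y : F) :
    f y ≤ f x + ⟪gradient f x, y - x⟫ + L / 2 * ‖y - x‖ ^ 2 := by
  have hLip' : ∀ u, ‖fderiv ℝ f u - fderiv ℝ f x‖ ≤ L * ‖u - x‖ := fun u ↦ by
    rw [← toDual_gradient, ← toDual_gradient, ← map_sub, LinearIsometryEquiv.norm_map]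
    exact hLip u
  have h := le_add_fderiv_add_half_mul_sq_of_norm_fderiv_sub_le (fun u ↦ (hf u).hasFDerivAt)
    hLip' y
  rwa [← toDual_gradient, InnerProductSpace.toDual_apply_apply] at h

variable {G g : F} {θ : ℝ}

theorem one_sub_mul_norm_sq_le_inner_of_norm_sub_le (hg : ‖g - G‖ ≤ θ * ‖G‖) :
    (1 - θ) * ‖G‖ ^ 2 ≤ ⟪G, g⟫ := by
  have hcs : ⟪G, G - g⟫ ≤ ‖G‖ * ‖g - G‖ := norm_sub_rev G g ▸ real_inner_le_norm G (G - g)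
  rw [inner_sub_right, real_inner_self_eq_norm_sq] at hcs
  nlinarith [norm_nonneg G]

theorem le_sub_apply_sub_smul_of_norm_sub_gradient_le [CompleteSpace F] {f : F → ℝ} {L σ : ℝ}
    (hL : 0 ≤ L) (hσ : 0 < σ) (hf : Differentiable ℝ f)
    {x : F} (hLip : ∀ u, ‖gradient f u - gradient f x‖ ≤ L * ‖u - x‖)
    (hg : ‖g - gradient f x‖ ≤ θ * ‖gradient f x‖) :
    (1 - θ - L / (2 * σ) * (θ + 1) ^ 2) * (1 / σ) * ‖gradient f x‖ ^ 2 ≤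
      f x - f (x - (1 / σ) • g) := by
  have hdesc := le_add_inner_gradient_add_half_mul_sq_of_norm_gradient_sub_le hf
    hLip (x - (1 / σ) • g)
  have hinner := one_sub_mul_norm_sq_le_inner_of_norm_sub_le hg
  have hnorm := pow_le_pow_left₀ (norm_nonneg g) (norm_le_one_add_mul_norm_of_norm_sub_le hg) 2
  rw [sub_sub_cancel_left, inner_neg_right, real_inner_smul_right, norm_neg, norm_smul,
    Real.norm_of_nonneg (by positivity)] at hdesc
  calc (1 - θ - L / (2 * σ) * (θ + 1) ^ 2) * (1 / σ) * ‖gradient f x‖ ^ 2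
      = 1 / σ * ((1 - θ) * ‖gradient f x‖ ^ 2)
          - L / 2 * ((1 / σ) ^ 2 * ((1 + θ) * ‖gradient f x‖) ^ 2) := by field_simp; ring
    _ ≤ 1 / σ * ⟪gradient f x, g⟫ - L / 2 * ((1 / σ) ^ 2 * ‖g‖ ^ 2) := by gcongr
    _ ≤ f x - f (x - (1 / σ) • g) := by linarith

end InexactGradient

theorem stmt_6_general (n : ℕ) (L θ σ : ℝ) (hL : 0 < L)
    (hσ : 0 < σ)
    (f : EuclideanSpace ℝ (Fin n) → ℝ) (hf : Differentiable ℝ f)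
    (hLip : ∀ u v : EuclideanSpace ℝ (Fin n),
      ‖gradient f u - gradient f v‖ ≤ L * ‖u - v‖)
    (x g : EuclideanSpace ℝ (Fin n))
    (hg : ‖g - gradient f x‖ ≤ θ * ‖gradient f x‖) :
    (1 - θ - L / (2 * σ) * (θ + 1) ^ 2) * (1 / σ) * ‖gradient f x‖ ^ 2 ≤
      f x - f (x - (1 / σ) • g) :=
  le_sub_apply_sub_smul_of_norm_sub_gradient_le hL.le hσ hf (fun u ↦ hLip u x) hg

theorem stmt_6 (n : ℕ) (L θ σ : ℝ) (hL : 0 < L) (hθ0 : 0 ≤ θ) (hθ1 : θ < 1 / 2)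
    (hσ : 0 < σ)
    (f : EuclideanSpace ℝ (Fin n) → ℝ) (hf : Differentiable ℝ f)
    (hLip : ∀ u v : EuclideanSpace ℝ (Fin n),
      ‖gradient f u - gradient f v‖ ≤ L * ‖u - v‖)
    (x g : EuclideanSpace ℝ (Fin n))
    (hg : ‖g - gradient f x‖ ≤ θ * ‖gradient f x‖) :
    (1 - θ - L / (2 * σ) * (θ + 1) ^ 2) * (1 / σ) * ‖gradient f x‖ ^ 2 ≤
      f x - f (x - (1 / σ) • g) :=
  stmt_6_general n L θ σ hL hσ f hf hLip x g hg
end
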